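/- arXiv:1111.2783 — 2 statements merged into one kernel-verified Lean document; each statement's English description precedes it below -/
import Mathlib

section
/- Fix integers k ≥ 1 and m ≥ 2, and indices i_1, …, i_{m-1} ∈ {1, …, k}. Let R = R_{i_1} ∪ ⋯ ∪ R_{i_{m-1}} and let 𝓡 be the (k+1)-core with 𝔭(𝓡) = R, where 𝔭 is the Lapointe–Morse map. Then 𝓡 has exactly one addable residue: there is a unique r ∈ ℤ/(k+1)ℤ such that 𝓡 has an addable cell of residue r, and this r is congruent to i_1 + ⋯ + i_{m-1} modulo k+1. Moreover the length of the first row of 𝓡 is i_1 + ⋯ + i_{m-1}. -/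
open scoped RealInnerProductSpace

/-- The hook length of the cell `c` (0-indexed) in the Young diagram `μ`:
arm + leg + 1 = rowLen c.1 + colLen c.2 - c.1 - c.2 - 1. -/
def YoungDiagram.hook (μ : YoungDiagram) (c : ℕ × ℕ) : ℕ :=
  μ.rowLen c.1 + μ.colLen c.2 - c.1 - c.2 - 1

/-- A partition is a `t`-core if no cell has hook length `t`. -/
def YoungDiagram.IsCore (μ : YoungDiagram) (t : ℕ) : Prop :=
  ∀ c ∈ μ.cells, μ.hook c ≠ t

/-- `c` is an addable cell of `μ`: it is not in `μ` and inserting it yields a Young diagram. -/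
def YoungDiagram.IsAddable (μ : YoungDiagram) (c : ℕ × ℕ) : Prop :=
  c ∉ μ ∧ ∃ ν : YoungDiagram, ν.cells = insert c μ.cells

/-- `c` is a removable cell of `μ`: it is in `μ` and erasing it yields a Young diagram. -/
def YoungDiagram.IsRemovable (μ : YoungDiagram) (c : ℕ × ℕ) : Prop :=
  c ∈ μ ∧ ∃ ν : YoungDiagram, ν.cells = μ.cells.erase c

/-- The residue mod `k+1` of a cell: its content `c.2 - c.1` taken in `ZMod (k+1)`. -/
def residue (k : ℕ) (c : ℕ × ℕ) : ZMod (k + 1) :=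
  (((c.2 : ℤ) - (c.1 : ℤ) : ℤ) : ZMod (k + 1))

/-- The rectangular Young diagram with `r` rows and `c` columns. -/
def rectangle (r c : ℕ) : YoungDiagram where
  cells := Finset.range r ×ˢ Finset.range c
  isLowerSet := by
    rintro ⟨a, b⟩ ⟨x, y⟩ ⟨h1, h2⟩ h
    simp only [Finset.coe_product, Set.mem_prod, Finset.mem_coe, Finset.mem_range] at *
    exact ⟨lt_of_le_of_lt h1 h.1, lt_of_le_of_lt h2 h.2⟩

/-- The rectangle `R_i = (i^{k-i+1})`, whose largest hook length is `k`. -/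
def kRectangle (k i : ℕ) : YoungDiagram := rectangle (k - i + 1) i

/-- The multiset of (nonzero) parts of a Young diagram. -/
def partsOf (μ : YoungDiagram) : Multiset ℕ := (μ.rowLens : Multiset ℕ)

/-- The Young diagram whose parts are the given multiset, sorted into non-increasing order. -/
def diagramOfParts (s : Multiset ℕ) : YoungDiagram :=
  YoungDiagram.ofRowLens (s.sort (· ≥ ·)) (List.sortedGE_iff_pairwise.mpr (s.pairwise_sort _))

/-- `R_{i_1} ∪ ⋯ ∪ R_{i_{m-1}}`: the partition obtained by combining the parts of
the rectangles `R_i` for `i` ranging over the multiset `S` (with multiplicity). -/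
def unionRects (k : ℕ) (S : Multiset ℕ) : YoungDiagram :=
  diagramOfParts ((S.map fun i => partsOf (kRectangle k i)).sum)

/-- The Lapointe–Morse map: the `i`-th entry of `pMap k μ` is the number of cells in
row `i` of `μ` whose hook length is at most `k`. -/
def pMap (k : ℕ) (μ : YoungDiagram) (i : ℕ) : ℕ :=
  ((Finset.range (μ.rowLen i)).filter fun j => μ.hook (i, j) ≤ k).card

/-- The simple roots of type `A_k` in the standard realization. -/
noncomputable def simpleRoot (k : ℕ) (i : Fin k) : EuclideanSpace ℝ (Fin (k + 1)) :=
  EuclideanSpace.single i.castSucc 1 - EuclideanSpace.single i.succ 1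

/-- The highest root `φ = α_1 + ⋯ + α_k` of type `A_k`. -/
noncomputable def highestRoot (k : ℕ) : EuclideanSpace ℝ (Fin (k + 1)) :=
  ∑ i, simpleRoot k i

/-!
Encode a diagram by its beta-numbers `β_i = λ_i - i`. The co-beta numbers `j + 1 - λ'_j` of
the columns fill the complement of the beta-set in `ℤ`, and the hook of `(i, j)` is
`β_i - (j + 1 - λ'_j)`. Hence `μ` is a `(k + 1)`-core iff its beta-set is closed under
`n ↦ n - (k + 1)`, `𝔭(μ)_i` is the number of gaps in `[β_i - k, β_i)`, and `(i, λ_i)` is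
addable iff `β_i + 1` is a gap.

Going up from the bottom, the gap counts determine the beta-numbers of a core one at a time,
so `𝓡` is the explicit core `coreRows` assembled from the blocks `R_{l_1}, R_{l_2}, …`
(`l_1 ≥ l_2 ≥ ⋯`). Its first row is `l_1 + l_2 + ⋯`, and the beads followed by a gap are the
tops of the blocks, which are all congruent to `l_1 + l_2 + ⋯` modulo `k + 1`.
-/

open Finset

namespace YoungDiagram

variable (μ : YoungDiagram)

def beta (i : ℕ) : ℤ := μ.rowLen i - i

def coBeta (j : ℕ) : ℤ := j + 1 - μ.colLen j

theorem beta_strictAnti : StrictAnti μ.beta :=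
  strictAnti_nat_of_succ_lt fun i => by
    have := μ.rowLen_anti i (i + 1) i.le_succ
    simp only [beta]; push_cast; omega

theorem coBeta_strictMono : StrictMono μ.coBeta :=
  strictMono_nat_of_lt_succ fun j => by
    have := μ.colLen_anti j (j + 1) j.le_succ
    simp only [coBeta]; push_cast; omega

variable {μ}

theorem coBeta_lt_beta_of_mem {i j : ℕ} (h : (i, j) ∈ μ) : μ.coBeta j < μ.beta i := by
  have := mem_iff_lt_rowLen.mp h
  have := mem_iff_lt_colLen.mp h
  simp only [beta, coBeta]; omega

theorem beta_lt_coBeta_of_notMem {i j : ℕ} (h : (i, j) ∉ μ) : μ.beta i < μ.coBeta j := by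
  rw [mem_iff_lt_rowLen] at h
  have : μ.colLen j ≤ i := not_lt.mp (mt mem_iff_lt_colLen.mpr (by rwa [mem_iff_lt_rowLen]))
  simp only [beta, coBeta]; omega

theorem hook_eq_beta_sub_coBeta {i j : ℕ} (h : (i, j) ∈ μ) :
    (μ.hook (i, j) : ℤ) = μ.beta i - μ.coBeta j := by
  have := mem_iff_lt_rowLen.mp h
  have := mem_iff_lt_colLen.mp h
  simp only [hook, beta, coBeta]; omega

theorem beta_ne_coBeta (i j : ℕ) : μ.beta i ≠ μ.coBeta j := by
  by_cases h : (i, j) ∈ μ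
  · exact (coBeta_lt_beta_of_mem h).ne'
  · exact (beta_lt_coBeta_of_notMem h).ne

theorem beta_eq_neg_of_colLen_le {i : ℕ} (h : μ.colLen 0 ≤ i) : μ.beta i = -i := by
  have : μ.rowLen i = 0 := by
    by_contra h'
    exact h.not_gt (mem_iff_lt_colLen.mp (mem_iff_lt_rowLen.mpr (Nat.pos_of_ne_zero h')))
  simp [beta, this]

/-- If `i` is the first row with `β_i ≤ n < β_{i-1}`, then column `n + i - 1` has length
exactly `i`, so `n` is the co-beta number of that column unless it is `β_i`. -/
theorem mem_range_beta_or_coBeta (n : ℤ) :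
    n ∈ Set.range μ.beta ∨ n ∈ Set.range μ.coBeta := by
  have hex : ∃ i, μ.beta i ≤ n :=
    ⟨(μ.rowLen 0 - n).toNat, by
      have := μ.rowLen_anti 0 (μ.rowLen 0 - n).toNat (Nat.zero_le _)
      simp only [beta]; omega⟩
  classical
  set i := Nat.find hex
  have hi : μ.beta i ≤ n := Nat.find_spec hex
  have hprev : i = 0 ∨ n < μ.beta (i - 1) :=
    (Nat.eq_zero_or_pos i).imp_right fun h => not_le.mp (Nat.find_min hex (by omega))
  rcases hi.eq_or_lt with hi | hi
  · exact Or.inl ⟨i, hi⟩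
  refine Or.inr ⟨(n + i - 1).toNat, ?_⟩
  have hj : ((n + i - 1).toNat : ℤ) = n + i - 1 := by simp only [beta] at hi; omega
  have hcol_le : μ.colLen (n + i - 1).toNat ≤ i :=
    not_lt.mp fun h => by
      have := mem_iff_lt_rowLen.mp (mem_iff_lt_colLen.mpr h)
      simp only [beta] at hi; omega
  have hcol_ge : i ≤ μ.colLen (n + i - 1).toNat := by
    rcases hprev with h | h
    · omega
    · have := mem_iff_lt_colLen.mp (mem_iff_lt_rowLen.mpr (show (n + i - 1).toNat <
        μ.rowLen (i - 1) by simp only [beta] at h; omega))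
      omega
  simp only [coBeta]; omega

theorem beta_sub_mem_range_of_isCore {k : ℕ} (hμ : μ.IsCore (k + 1)) (i : ℕ) :
    μ.beta i - (k + 1) ∈ Set.range μ.beta := by
  refine (mem_range_beta_or_coBeta _).resolve_right ?_
  rintro ⟨j, hj⟩
  have hmem : (i, j) ∈ μ := by
    by_contra h
    have := beta_lt_coBeta_of_notMem h
    omega
  have := hook_eq_beta_sub_coBeta hmem
  exact hμ (i, j) ((mem_cells _).mpr hmem) (by omega)

theorem IsAddable.snd_eq_rowLen_and_lt_rowLen_pred {i j : ℕ} (h : μ.IsAddable (i, j)) :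
    j = μ.rowLen i ∧ (i = 0 ∨ j < μ.rowLen (i - 1)) := by
  obtain ⟨hnot, ν, hν⟩ := h
  have mem_ν : ∀ c, c ∈ ν ↔ c = (i, j) ∨ c ∈ μ := by
    intro c; rw [← mem_cells, hν, Finset.mem_insert, mem_cells]
  have hij : (i, j) ∈ ν := (mem_ν _).mpr (Or.inl rfl)
  have hle : μ.rowLen i ≤ j := not_lt.mp (mt mem_iff_lt_rowLen.mpr hnot)
  refine ⟨le_antisymm ?_ hle, ?_⟩
  · by_contra! h
    have := ((mem_ν _).mp (ν.up_left_mem le_rfl h.le hij)).resolve_left (by simp; omega)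
    exact (mem_iff_lt_rowLen.mp this).false
  · refine (Nat.eq_zero_or_pos i).imp_right fun hi => mem_iff_lt_rowLen.mp ?_
    exact ((mem_ν _).mp (ν.up_left_mem (Nat.sub_le i 1) le_rfl hij)).resolve_left
      (by simp; omega)

theorem isAddable_zero_rowLen_zero (μ : YoungDiagram) : μ.IsAddable (0, μ.rowLen 0) := by
  refine ⟨fun h => (mem_iff_lt_rowLen.mp h).false, ⟨insert (0, μ.rowLen 0) μ.cells, ?_⟩, rfl⟩
  rintro ⟨x, y⟩ ⟨a, b⟩ ⟨hax, hby⟩ hxy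
  simp only [coe_insert, Set.mem_insert_iff, Prod.mk.injEq, mem_coe, mem_cells] at hxy ⊢
  rcases hxy with ⟨rfl, rfl⟩ | hxy
  · obtain rfl : a = 0 := Nat.le_zero.mp hax
    exact (eq_or_lt_of_le hby).imp (⟨rfl, ·⟩) mem_iff_lt_rowLen.mpr
  · exact Or.inr (μ.up_left_mem hax hby hxy)

theorem beta_add_one_notMem_range_beta {i : ℕ} (h : i = 0 ∨ μ.rowLen i < μ.rowLen (i - 1)) :
    μ.beta i + 1 ∉ Set.range μ.beta := by
  rintro ⟨t, ht⟩
  have hti : t < i := μ.beta_strictAnti.lt_iff_gt.mp (by omega)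
  have := μ.beta_strictAnti.antitone (show t ≤ i - 1 by omega)
  rcases h with rfl | h
  · omega
  · simp only [beta] at *; push_cast [show 1 ≤ i by omega] at this; omega

theorem IsAddable.beta_add_one_notMem {c : ℕ × ℕ} (h : μ.IsAddable c) :
    c.2 = μ.rowLen c.1 ∧ μ.beta c.1 + 1 ∉ Set.range μ.beta := by
  obtain ⟨hj, hcorner⟩ := IsAddable.snd_eq_rowLen_and_lt_rowLen_pred (i := c.1) (j := c.2) h
  exact ⟨hj, beta_add_one_notMem_range_beta (hj ▸ hcorner)⟩

end YoungDiagram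

theorem Finset.card_filter_Ico_eq_add {α : Type*} [LinearOrder α] [LocallyFiniteOrder α]
    (p : α → Prop) [DecidablePred p] {a b c : α} (hab : a ≤ b) (hbc : b ≤ c) :
    #{n ∈ Ico a c | p n} = #{n ∈ Ico a b | p n} + #{n ∈ Ico b c | p n} := by
  rw [← Ico_union_Ico_eq_Ico hab hbc, filter_union,
    card_union_of_disjoint (disjoint_filter_filter (Ico_disjoint_Ico_consecutive a b c))]

open scoped Classical in
noncomputable def gapsBelow (k : ℕ) (D : Set ℤ) (b : ℤ) : ℕ :=
  #{n ∈ Ico (b - k) b | n ∉ D}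

section gapsBelow

open scoped Classical

variable {k : ℕ} {D D' : Set ℤ}

theorem gapsBelow_congr {b : ℤ} (h : ∀ n ∈ Ico (b - k) b, n ∈ D ↔ n ∈ D') :
    gapsBelow k D b = gapsBelow k D' b := by
  unfold gapsBelow
  congr 1
  exact filter_congr fun n hn => not_congr (h n hn)

theorem gapsBelow_add (D : Set ℤ) (b c : ℤ) :
    gapsBelow k D (b + c) = gapsBelow k ((· + c) ⁻¹' D) b := by
  unfold gapsBelow
  rw [show b + c - k = b - k + c by ring, ← image_add_right_Ico, filter_image,
    card_image_of_injective _ (add_left_injective c)]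
  rfl

/-- Above the upper bound `M` of `D`, every step of the window adds a gap at its top; the
step past `b' - (k + 1) ∈ D` also loses a bead at its bottom. -/
theorem gapsBelow_lt_gapsBelow {M b b' : ℤ} (hD : ∀ n ∈ D, n ≤ M) (hMb : M < b)
    (hbb' : b < b') (hb' : b' - (k + 1) ∈ D) : gapsBelow k D b < gapsBelow k D b' := by
  have hb'M := hD _ hb'
  unfold gapsBelow
  rw [card_filter_Ico_eq_add _ (show b - k ≤ b' - k by omega) (show b' - k ≤ b by omega),
    card_filter_Ico_eq_add _ (show b' - k ≤ b by omega) hbb'.le,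
    filter_true_of_mem (s := Ico b b') fun n hn hnD => by have := hD n hnD; simp at hn; omega]
  have : #{n ∈ Ico (b - k) (b' - k) | n ∉ D} < #(Ico b b') := by
    calc #{n ∈ Ico (b - k) (b' - k) | n ∉ D} < #(Ico (b - k) (b' - k)) :=
          card_lt_card (filter_ssubset.mpr ⟨b' - (k + 1), by simp; omega, by simpa using hb'⟩)
      _ = #(Ico b b') := by simp only [Int.card_Ico]; congr 1; ring
  omega

end gapsBelow

/-- The columns `j` of row `i` with hook length at most `k` are those whose co-beta number
lies in `[β_i - k, β_i)`, and these co-beta numbers are exactly the gaps there. -/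
theorem pMap_eq_gapsBelow (k : ℕ) (μ : YoungDiagram) (i : ℕ) :
    pMap k μ i = gapsBelow k (Set.range μ.beta) (μ.beta i) := by
  unfold pMap gapsBelow
  refine card_bij (fun j _ => μ.coBeta j) ?_ (fun _ _ _ _ h => μ.coBeta_strictMono.injective h) ?_
  · intro j hj
    simp only [mem_filter, mem_range] at hj
    have hmem : (i, j) ∈ μ := YoungDiagram.mem_iff_lt_rowLen.mpr hj.1
    have := YoungDiagram.hook_eq_beta_sub_coBeta hmem
    have := YoungDiagram.coBeta_lt_beta_of_mem hmem
    simp only [mem_filter, mem_Ico, Set.mem_range, not_exists]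
    exact ⟨⟨by omega, this⟩, fun t => YoungDiagram.beta_ne_coBeta t j⟩
  · intro n hn
    simp only [mem_filter, mem_Ico] at hn
    obtain ⟨j, rfl⟩ := (YoungDiagram.mem_range_beta_or_coBeta n).resolve_left hn.2
    have hmem : (i, j) ∈ μ := by
      by_contra h
      have := YoungDiagram.beta_lt_coBeta_of_notMem h
      omega
    have := YoungDiagram.hook_eq_beta_sub_coBeta hmem
    exact ⟨j, by simp only [mem_filter, mem_range]; exact
      ⟨YoungDiagram.mem_iff_lt_rowLen.mp hmem, by omega⟩, rfl⟩

section StrictAnti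

variable {k : ℕ} {β β' : ℕ → ℤ}

theorem StrictAnti.mem_range_iff_mem_image_Ioi (hβ : StrictAnti β) {i : ℕ} {n : ℤ}
    (hn : n < β i) : n ∈ Set.range β ↔ n ∈ β '' Set.Ioi i :=
  ⟨fun ⟨t, ht⟩ => ⟨t, hβ.lt_iff_gt.mp (ht ▸ hn), ht⟩, fun ⟨t, _, ht⟩ => ⟨t, ht⟩⟩

/-- The beads below `β_i` are the `β_t` with `t > i`; once these agree for `β` and `β'`,
`gapsBelow_lt_gapsBelow` shows that the gap count in the window below `β_i` pins down `β_i`. -/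
theorem StrictAnti.eq_of_gapsBelow_eq_of_forall_gt (hβ : StrictAnti β) (hβ' : StrictAnti β')
    (hcl : ∀ i, β i - (k + 1) ∈ Set.range β) (hcl' : ∀ i, β' i - (k + 1) ∈ Set.range β')
    (hgap : ∀ i, gapsBelow k (Set.range β) (β i) = gapsBelow k (Set.range β') (β' i))
    {i : ℕ} (hgt : ∀ t > i, β t = β' t) : β i = β' i := by
  set D := β '' Set.Ioi i
  have hD' : β' '' Set.Ioi i = D := Set.image_congr fun t ht => (hgt t ht).symm
  have hDle : ∀ n ∈ D, n ≤ β (i + 1) := by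
    rintro _ ⟨t, ht, rfl⟩; exact hβ.antitone ht
  have hM : β (i + 1) < β i := hβ (Nat.lt_succ_self i)
  have hM' : β (i + 1) < β' i := hgt (i + 1) (Nat.lt_succ_self i) ▸ hβ' (Nat.lt_succ_self i)
  have hclD : β i - (k + 1) ∈ D := (hβ.mem_range_iff_mem_image_Ioi (by omega)).mp (hcl i)
  have hclD' : β' i - (k + 1) ∈ D :=
    hD' ▸ (hβ'.mem_range_iff_mem_image_Ioi (by omega)).mp (hcl' i)
  have hgapD : gapsBelow k D (β i) = gapsBelow k D (β' i) := by
    rw [gapsBelow_congr fun n hn => (hβ.mem_range_iff_mem_image_Ioi (mem_Ico.mp hn).2).symm,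
      gapsBelow_congr (b := β' i) fun n hn =>
        hD' ▸ (hβ'.mem_range_iff_mem_image_Ioi (mem_Ico.mp hn).2).symm]
    exact hgap i
  rcases lt_trichotomy (β i) (β' i) with h | h | h
  · exact absurd hgapD (gapsBelow_lt_gapsBelow hDle hM h hclD').ne
  · exact h
  · exact absurd hgapD (gapsBelow_lt_gapsBelow hDle hM' h hclD).ne'

/-- Injectivity of `𝔭` on `(k + 1)`-cores, phrased for beta-sequences. -/
theorem StrictAnti.eq_of_gapsBelow_eq (hβ : StrictAnti β) (hβ' : StrictAnti β')
    (hcl : ∀ i, β i - (k + 1) ∈ Set.range β) (hcl' : ∀ i, β' i - (k + 1) ∈ Set.range β')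
    (hgap : ∀ i, gapsBelow k (Set.range β) (β i) = gapsBelow k (Set.range β') (β' i))
    {N : ℕ} (htail : ∀ i ≥ N, β i = β' i) : β = β' := by
  suffices ∀ d i, N ≤ i + d → β i = β' i from funext fun i => this N i (by omega)
  intro d
  induction d with
  | zero => exact htail
  | succ d ih =>
    intro i hi
    by_cases h : N ≤ i + d
    · exact ih i h
    · exact hβ.eq_of_gapsBelow_eq_of_forall_gt hβ' hcl hcl' hgap fun t ht => ih t (by omega)

theorem List.getD_replicate_append {α : Type*} (n : ℕ) (a d : α) (l : List α) (i : ℕ) :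
    (replicate n a ++ l).getD i d = if i < n then a else l.getD (i - n) d := by
  split_ifs with h
  · rw [getD_append _ _ _ _ (by simpa using h), getD_replicate (h := h)]
  · rw [getD_append_right _ _ _ _ (by simpa using h), length_replicate]

/-- The rows of `R_{l_1} ∪ R_{l_2} ∪ ⋯` for `L = [l_1, l_2, …]`, listed block by block. -/
def rectRows (k : ℕ) : List ℕ → List ℕ
  | [] => []
  | l :: L => List.replicate (k - l + 1) l ++ rectRows k L

/-- The rows of the `(k + 1)`-core `𝓡` with `𝔭(𝓡) = R_{l_1} ∪ R_{l_2} ∪ ⋯`: the `k - l_1 + 1` rows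
of `R_{l_1}` are each lengthened to `l_1 + l_2 + ⋯`, above the core for the remaining list. -/
def coreRows (k : ℕ) : List ℕ → List ℕ
  | [] => []
  | l :: L => List.replicate (k - l + 1) (l + L.sum) ++ coreRows k L

def coreBeta (k : ℕ) (L : List ℕ) (i : ℕ) : ℤ := ((coreRows k L).getD i 0 : ℤ) - i

section CoreBeta

variable {k l : ℕ} {L : List ℕ}

theorem coreRows_getD_le_sum (k : ℕ) (L : List ℕ) (i : ℕ) : (coreRows k L).getD i 0 ≤ L.sum := by
  induction L generalizing i with
  | nil => simp [coreRows]
  | cons l L ih =>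
    rw [coreRows, List.getD_replicate_append, List.sum_cons]
    split_ifs
    · rfl
    · exact (ih _).trans (Nat.le_add_left _ _)

theorem coreBeta_le_sum (k : ℕ) (L : List ℕ) (i : ℕ) : coreBeta k L i ≤ L.sum := by
  have := coreRows_getD_le_sum k L i
  unfold coreBeta; omega

theorem coreRows_getD_succ_le (k : ℕ) (L : List ℕ) (i : ℕ) :
    (coreRows k L).getD (i + 1) 0 ≤ (coreRows k L).getD i 0 := by
  induction L generalizing i with
  | nil => simp [coreRows]
  | cons l L ih =>
    simp only [coreRows, List.getD_replicate_append]
    split_ifs with h₁ h₂ h₂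
    · rfl
    · omega
    · exact (coreRows_getD_le_sum k L _).trans (Nat.le_add_left _ _)
    · rw [show i + 1 - (k - l + 1) = i - (k - l + 1) + 1 by omega]
      exact ih _

theorem coreBeta_strictAnti (k : ℕ) (L : List ℕ) : StrictAnti (coreBeta k L) :=
  strictAnti_nat_of_succ_lt fun i => by
    have := coreRows_getD_succ_le k L i
    unfold coreBeta; push_cast; omega

theorem coreBeta_of_length_le {i : ℕ} (h : (coreRows k L).length ≤ i) : coreBeta k L i = -i := by
  rw [coreBeta, List.getD_eq_default _ _ h]; simp

theorem coreBeta_cons_of_lt {i : ℕ} (h : i < k - l + 1) :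
    coreBeta k (l :: L) i = l + L.sum - i := by
  rw [coreBeta, coreRows, List.getD_replicate_append, if_pos h]; push_cast; ring

theorem coreBeta_cons_of_ge {i : ℕ} (h : k - l + 1 ≤ i) :
    coreBeta k (l :: L) i = coreBeta k L (i - (k - l + 1)) - (k - l + 1 : ℕ) := by
  simp only [coreBeta, coreRows, List.getD_replicate_append, if_neg (not_lt.mpr h)]
  omega

theorem coreBeta_zero (k : ℕ) (L : List ℕ) : coreBeta k L 0 = L.sum := by
  cases L with
  | nil => simp [coreBeta, coreRows]
  | cons l L => rw [coreBeta_cons_of_lt (Nat.succ_pos _), List.sum_cons]; push_cast; ring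

theorem sum_sub_mem_range_coreBeta {d : ℕ} (hd : ∀ l ∈ L, d ≤ k - l) :
    (L.sum : ℤ) - d ∈ Set.range (coreBeta k L) := by
  refine ⟨d, ?_⟩
  cases L with
  | nil => simp [coreBeta, coreRows]
  | cons l L =>
    rw [coreBeta_cons_of_lt (by have := hd l (by simp); omega), List.sum_cons]; push_cast; ring

theorem mem_range_coreBeta_cons_iff {n : ℤ} :
    n ∈ Set.range (coreBeta k (l :: L)) ↔
      (l + L.sum - (k - l : ℕ) ≤ n ∧ n ≤ l + L.sum) ∨
        n + (k - l + 1 : ℕ) ∈ Set.range (coreBeta k L) := by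
  constructor
  · rintro ⟨t, rfl⟩
    rcases lt_or_ge t (k - l + 1) with h | h
    · rw [coreBeta_cons_of_lt h]; left; omega
    · rw [coreBeta_cons_of_ge h]; exact Or.inr ⟨_, by ring⟩
  · rintro (h | ⟨t, ht⟩)
    · refine ⟨(l + L.sum - n).toNat, ?_⟩
      rw [coreBeta_cons_of_lt (by omega)]; omega
    · refine ⟨t + (k - l + 1), ?_⟩
      rw [coreBeta_cons_of_ge (by omega), Nat.add_sub_cancel, ht]; ring

theorem coreBeta_sub_mem_range (hL : ∀ l ∈ L, l ≤ k) (hsort : L.Pairwise (· ≥ ·)) (i : ℕ) :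
    coreBeta k L i - (k + 1) ∈ Set.range (coreBeta k L) := by
  induction L generalizing i with
  | nil => exact ⟨i + (k + 1), by simp [coreBeta, coreRows]; ring⟩
  | cons l L ih =>
    rw [List.pairwise_cons] at hsort
    have hlk := hL l (by simp)
    have hL' : ∀ l ∈ L, l ≤ k := fun l' h => hL l' (by simp [h])
    rw [mem_range_coreBeta_cons_iff]
    right
    rcases lt_or_ge i (k - l + 1) with h | h
    · rw [coreBeta_cons_of_lt h]
      convert sum_sub_mem_range_coreBeta (k := k) (d := i)
        fun l' h' => by have := hsort.1 l' h'; omega using 1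
      omega
    · rw [coreBeta_cons_of_ge h]
      convert ih hL' hsort.2 (i - (k - l + 1)) using 1
      ring

/-- The tops of the blocks of `coreRows` are the beads `β` with `β + 1` not a bead; they are
`L.sum - t (k + 1)`, since block `R_l` spans `k - l + 1` rows and shortens the rows below by
`l`. -/
theorem coreBeta_cast_eq_sum (hL : ∀ l ∈ L, l ≤ k) {i : ℕ}
    (h : coreBeta k L i + 1 ∉ Set.range (coreBeta k L)) :
    (coreBeta k L i : ZMod (k + 1)) = L.sum := by
  induction L generalizing i with
  | nil =>
    cases i with
    | zero => simp [coreBeta_zero]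
    | succ i => exact absurd ⟨i, by simp only [coreBeta, coreRows]; simp⟩ h
  | cons l L ih =>
    have hL' : ∀ l ∈ L, l ≤ k := fun l' h => hL l' (by simp [h])
    rcases lt_or_ge i (k - l + 1) with hi | hi
    · cases i with
      | zero => rw [coreBeta_zero, Int.cast_natCast]
      | succ i =>
        refine absurd ⟨i, ?_⟩ h
        rw [coreBeta_cons_of_lt hi, coreBeta_cons_of_lt (by omega)]; push_cast; ring
    · rw [mem_range_coreBeta_cons_iff, coreBeta_cons_of_ge hi, not_or] at h
      have := ih hL' (i := i - (k - l + 1)) (by convert h.2 using 2; ring)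
      have hkl : ((k - l + 1 : ℕ) : ZMod (k + 1)) = -l := by
        rw [eq_neg_iff_add_eq_zero, ← Nat.cast_add,
          show k - l + 1 + l = k + 1 by have := hL l (by simp); omega, ZMod.natCast_self]
      rw [coreBeta_cons_of_ge hi, Int.cast_sub, this, Int.cast_natCast, hkl, List.sum_cons,
        Nat.cast_add]
      ring

theorem gapsBelow_coreBeta_cons_of_lt (hL : ∀ l' ∈ l :: L, l' ≤ k)
    (hsort : (l :: L).Pairwise (· ≥ ·)) {i : ℕ} (hi : i < k - l + 1) :
    gapsBelow k (Set.range (coreBeta k (l :: L))) (coreBeta k (l :: L) i) = l := by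
  classical
  rw [List.pairwise_cons] at hsort
  have hlk := hL l (by simp)
  have hgaps : {n ∈ Ico (coreBeta k (l :: L) i - k) (coreBeta k (l :: L) i) |
      n ∉ Set.range (coreBeta k (l :: L))} = Ico (l + L.sum - k : ℤ) (2 * l + L.sum - k) := by
    ext n
    simp only [mem_filter, mem_Ico, mem_range_coreBeta_cons_iff, coreBeta_cons_of_lt hi]
    constructor
    · rintro ⟨hn, hnot⟩
      rw [not_or] at hnot
      refine ⟨by_contra fun hlt => hnot.2 ?_, by omega⟩
      convert sum_sub_mem_range_coreBeta (k := k) (d := (L.sum - (n + (k - l + 1 : ℕ))).toNat)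
        fun l' h' => by have := hsort.1 l' h'; omega using 1
      omega
    · rintro hn
      refine ⟨by omega, not_or.mpr ⟨by omega, fun ⟨t, ht⟩ => ?_⟩⟩
      have := coreBeta_le_sum k L t
      omega
  unfold gapsBelow
  rw [hgaps, Int.card_Ico]
  omega

theorem gapsBelow_coreBeta_cons_of_ge {i : ℕ} (hi : k - l + 1 ≤ i) :
    gapsBelow k (Set.range (coreBeta k (l :: L))) (coreBeta k (l :: L) i) =
      gapsBelow k (Set.range (coreBeta k L)) (coreBeta k L (i - (k - l + 1))) := by
  rw [coreBeta_cons_of_ge hi, sub_eq_add_neg, gapsBelow_add]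
  refine gapsBelow_congr fun n hn => ?_
  have := coreBeta_le_sum k L (i - (k - l + 1))
  simp only [mem_Ico] at hn
  rw [Set.mem_preimage, mem_range_coreBeta_cons_iff, neg_add_cancel_right, or_iff_right]
  omega

theorem gapsBelow_coreBeta (hL : ∀ l ∈ L, l ≤ k) (hsort : L.Pairwise (· ≥ ·)) (i : ℕ) :
    gapsBelow k (Set.range (coreBeta k L)) (coreBeta k L i) = (rectRows k L).getD i 0 := by
  induction L generalizing i with
  | nil =>
    classical
    rw [rectRows, List.getD_nil, gapsBelow, card_eq_zero, filter_eq_empty_iff]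
    intro n hn
    simp only [coreBeta, coreRows, List.getD_nil, mem_Ico] at hn
    exact not_not.mpr ⟨(-n).toNat, by simp only [coreBeta, coreRows, List.getD_nil]; omega⟩
  | cons l L ih =>
    rw [rectRows, List.getD_replicate_append]
    split_ifs with hi
    · exact gapsBelow_coreBeta_cons_of_lt hL hsort hi
    · rw [gapsBelow_coreBeta_cons_of_ge (not_lt.mp hi)]
      exact ih (fun l' h => hL l' (by simp [h])) (List.pairwise_cons.mp hsort).2 _

end CoreBeta

theorem YoungDiagram.rowLen_ofRowLens_eq_getD (w : List ℕ) (hw : w.SortedGE) (i : ℕ) :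
    (ofRowLens w hw).rowLen i = w.getD i 0 := by
  rcases lt_or_ge i w.length with h | h
  · rw [List.getD_eq_getElem _ _ h]
    exact rowLen_ofRowLens ⟨i, h⟩
  · rw [List.getD_eq_default _ _ h, ← Nat.le_zero, ← not_lt, ← mem_iff_lt_rowLen, mem_ofRowLens]
    exact fun ⟨h', _⟩ => h'.not_ge h

theorem rectangle_eq_ofRowLens (r c : ℕ) :
    rectangle r c = YoungDiagram.ofRowLens (List.replicate r c)
      (List.sortedGE_iff_pairwise.mpr List.pairwise_replicate_of_refl) := by
  ext ⟨a, b⟩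
  simp [rectangle, YoungDiagram.mem_ofRowLens]

theorem partsOf_kRectangle {k l : ℕ} (hl : 1 ≤ l) :
    partsOf (kRectangle k l) = Multiset.replicate (k - l + 1) l := by
  rw [partsOf, kRectangle, rectangle_eq_ofRowLens,
    YoungDiagram.rowLens_ofRowLens_eq_self fun x hx => (List.eq_of_mem_replicate hx) ▸ hl]
  rfl

section RectRows

variable {k : ℕ} {L : List ℕ}

theorem coe_rectRows (hL : ∀ l ∈ L, 1 ≤ l) :
    (rectRows k L : Multiset ℕ) = ((L : Multiset ℕ).map fun l => partsOf (kRectangle k l)).sum := by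
  induction L with
  | nil => rfl
  | cons l L ih =>
    rw [rectRows, ← Multiset.coe_add, ← Multiset.cons_coe, Multiset.map_cons, Multiset.sum_cons,
      ih fun l' h => hL l' (by simp [h]), partsOf_kRectangle (hL l (by simp)),
      Multiset.coe_replicate]

theorem rectRows_subset (k : ℕ) (L : List ℕ) : rectRows k L ⊆ L := by
  induction L with
  | nil => exact List.nil_subset _
  | cons l L ih =>
    exact List.append_subset.mpr ⟨fun x hx => List.eq_of_mem_replicate hx ▸ List.mem_cons_self,
      fun x hx => List.mem_cons_of_mem l (ih hx)⟩

theorem pairwise_rectRows (hsort : L.Pairwise (· ≥ ·)) : (rectRows k L).Pairwise (· ≥ ·) := by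
  induction L with
  | nil => exact List.Pairwise.nil
  | cons l L ih =>
    rw [List.pairwise_cons] at hsort
    refine List.pairwise_append.mpr ⟨List.pairwise_replicate_of_refl, ih hsort.2, ?_⟩
    intro a ha b hb
    rw [List.eq_of_mem_replicate ha]
    exact hsort.1 b (rectRows_subset k L hb)

end RectRows

theorem unionRects_rowLen {k : ℕ} {S : Multiset ℕ} (hS : ∀ l ∈ S, 1 ≤ l) (i : ℕ) :
    (unionRects k S).rowLen i = (rectRows k (S.sort (· ≥ ·))).getD i 0 := by
  have hL : ∀ l ∈ S.sort (· ≥ ·), 1 ≤ l := fun l hl => hS l ((Multiset.mem_sort _).mp hl)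
  rw [unionRects, diagramOfParts, YoungDiagram.rowLen_ofRowLens_eq_getD]
  congr 1
  refine List.Perm.eq_of_pairwise' (Multiset.pairwise_sort _ _)
    (pairwise_rectRows (Multiset.pairwise_sort _ _)) ?_
  rw [← Multiset.coe_eq_coe, Multiset.sort_eq, coe_rectRows hL, Multiset.sort_eq]

theorem YoungDiagram.residue_eq_sum_of_isAddable {k : ℕ} {L : List ℕ} (hL : ∀ l ∈ L, l ≤ k)
    {μ : YoungDiagram} (hμ : μ.beta = coreBeta k L) {c : ℕ × ℕ} (hc : μ.IsAddable c) :
    residue k c = L.sum := by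
  obtain ⟨hc2, hnot⟩ := hc.beta_add_one_notMem
  rw [hμ] at hnot
  rw [← coreBeta_cast_eq_sum hL hnot, ← hμ, residue, hc2, beta]

theorem beta_eq_coreBeta_of_pMap_eq {k : ℕ} {S : Multiset ℕ} (hS : ∀ i ∈ S, 1 ≤ i ∧ i ≤ k)
    {μ : YoungDiagram} (hμ : μ.IsCore (k + 1)) (hp : ∀ i, pMap k μ i = (unionRects k S).rowLen i) :
    μ.beta = coreBeta k (S.sort (· ≥ ·)) := by
  set L := S.sort (· ≥ ·)
  have hL : ∀ l ∈ L, l ≤ k := fun l hl => (hS l ((Multiset.mem_sort _).mp hl)).2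
  have hsort : L.Pairwise (· ≥ ·) := Multiset.pairwise_sort _ _
  refine μ.beta_strictAnti.eq_of_gapsBelow_eq (coreBeta_strictAnti k L)
    (YoungDiagram.beta_sub_mem_range_of_isCore hμ) (coreBeta_sub_mem_range hL hsort)
    (fun i => ?_) (N := max (μ.colLen 0) (coreRows k L).length) fun i hi => ?_
  · rw [← pMap_eq_gapsBelow, hp, unionRects_rowLen (fun l hl => (hS l hl).1),
      gapsBelow_coreBeta hL hsort]
  · rw [YoungDiagram.beta_eq_neg_of_colLen_le (le_of_max_le_left hi),
      coreBeta_of_length_le (le_of_max_le_right hi)]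

theorem unique_addable_residue_general (k : ℕ)
    (S : Multiset ℕ) (hS : ∀ i ∈ S, 1 ≤ i ∧ i ≤ k)
    (𝓡 : YoungDiagram) (hcore : 𝓡.IsCore (k + 1))
    (hp : ∀ i, pMap k 𝓡 i = (unionRects k S).rowLen i) :
    (∃! r : ZMod (k + 1), ∃ c : ℕ × ℕ, 𝓡.IsAddable c ∧ residue k c = r) ∧
    (∀ c : ℕ × ℕ, 𝓡.IsAddable c → residue k c = ((S.sum : ℕ) : ZMod (k + 1))) ∧
    𝓡.rowLen 0 = S.sum := by
  have hL : ∀ l ∈ S.sort (· ≥ ·), l ≤ k := fun l hl => (hS l ((Multiset.mem_sort _).mp hl)).2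
  have hsum : (S.sort (· ≥ ·)).sum = S.sum := by rw [← Multiset.sum_coe, Multiset.sort_eq]
  have hβ := beta_eq_coreBeta_of_pMap_eq hS hcore hp
  have hres : ∀ c, 𝓡.IsAddable c → residue k c = S.sum := fun c hc =>
    hsum ▸ YoungDiagram.residue_eq_sum_of_isAddable hL hβ hc
  have hrow0 : 𝓡.rowLen 0 = S.sum := by
    have := congr_fun hβ 0
    rw [coreBeta_zero, hsum, YoungDiagram.beta] at this
    omega
  have hadd := 𝓡.isAddable_zero_rowLen_zero
  exact ⟨⟨S.sum, ⟨_, hadd, hres _ hadd⟩, fun r ⟨c, hc, hcr⟩ => hcr ▸ hres c hc⟩, hres, hrow0⟩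

/-- Let `R = R_{i_1} ∪ ⋯ ∪ R_{i_{m-1}}` and let `𝓡` be the `(k+1)`-core
with `𝔭(𝓡) = R`. Then `𝓡` has exactly one addable residue, this residue is congruent to
`i_1 + ⋯ + i_{m-1}` modulo `k+1`, and the first row of `𝓡` has length `i_1 + ⋯ + i_{m-1}`. -/
theorem unique_addable_residue (k m : ℕ) (hk : 1 ≤ k) (hm : 2 ≤ m)
    (S : Multiset ℕ) (hScard : Multiset.card S = m - 1) (hS : ∀ i ∈ S, 1 ≤ i ∧ i ≤ k)
    (𝓡 : YoungDiagram) (hcore : 𝓡.IsCore (k + 1))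
    (hp : ∀ i, pMap k 𝓡 i = (unionRects k S).rowLen i) :
    (∃! r : ZMod (k + 1), ∃ c : ℕ × ℕ, 𝓡.IsAddable c ∧ residue k c = r) ∧
    (∀ c : ℕ × ℕ, 𝓡.IsAddable c → residue k c = ((S.sum : ℕ) : ZMod (k + 1))) ∧
    𝓡.rowLen 0 = S.sum :=
  unique_addable_residue_general k S hS 𝓡 hcore hp
end StrictAnti
end

section
/- Fix an integer k ≥ 1. Let λ be a (k+1)-core and let r ∈ ℤ/(k+1)ℤ be a residue such that λ has at least one addable cell of residue r. Then the diagram obtained from λ by adding all addable cells of λ whose content is congruent to r modulo k+1 is the Young diagram of a partition, and this partition is again a (k+1)-core. -/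
open scoped RealInnerProductSpace

/-!
Encode `λ` by its beta-numbers `β i = λ_i - i`. Together with the numbers `j + 1 - λ'_j` they
partition `ℤ`, and the hook length of `(i, j)` is `β i - (j + 1 - λ'_j)`; hence `λ` is a `t`-core
iff its beta-set is closed under `x ↦ x - t`. Row `i` has an addable cell iff `β i + 1` is not a
beta-number, and that cell has residue `β i`. So adding all addable cells of residue `r` moves
every beta-number `x ≡ r` with `x + 1` free to `x + 1`, and since `r + 1 ≠ r` in `ZMod (k + 1)`
this move preserves closure under `x ↦ x - (k + 1)`.
-/

open scoped Classical in
noncomputable def residueShift (t : ℕ) (r : ZMod t) (B : Set ℤ) (x : ℤ) : ℤ :=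
  if (x : ZMod t) = r ∧ x + 1 ∉ B then x + 1 else x

theorem residueShift_sub_mem_image {t : ℕ} (ht : (1 : ZMod t) ≠ 0) {B : Set ℤ}
    (hB : ∀ x ∈ B, x - t ∈ B) (r : ZMod t) :
    ∀ y ∈ residueShift t r B '' B, y - t ∈ residueShift t r B '' B := by
  rintro _ ⟨x, hx, rfl⟩
  have hres : ((x - t : ℤ) : ZMod t) = x := by simp
  by_cases hP : (x : ZMod t) = r ∧ x + 1 ∉ B
  · rw [residueShift, if_pos hP]
    by_cases hnext : x - t + 1 ∈ B
    · refine ⟨x - t + 1, hnext, ?_⟩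
      rw [residueShift, if_neg (fun h => ht (by simpa [hP.1] using h.1))]
      ring
    · refine ⟨x - t, hB x hx, ?_⟩
      rw [residueShift, if_pos ⟨hres.trans hP.1, hnext⟩]
      ring
  · rw [residueShift, if_neg hP]
    refine ⟨x - t, hB x hx, ?_⟩
    rw [residueShift, if_neg]
    rintro ⟨hr, hnext⟩
    have hx1 : x + 1 ∈ B := by_contra fun h => hP ⟨hres ▸ hr, h⟩
    exact hnext (by simpa [sub_add_eq_add_sub] using hB _ hx1)

namespace YoungDiagram

variable (μ : YoungDiagram)

def betaNumber (i : ℕ) : ℤ := μ.rowLen i - i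

def colBetaNumber (j : ℕ) : ℤ := j + 1 - μ.colLen j

theorem rowLen_eq_zero_of_colLen_le {i : ℕ} (h : μ.colLen 0 ≤ i) : μ.rowLen i = 0 :=
  Nat.eq_zero_of_not_pos fun hpos => (mem_iff_lt_colLen.1 (mem_iff_lt_rowLen.2 hpos)).not_ge h

theorem betaNumber_strictAnti : StrictAnti μ.betaNumber :=
  strictAnti_nat_of_succ_lt fun n => by
    have := μ.rowLen_anti n (n + 1) n.le_succ
    unfold betaNumber; omega

variable {μ}

theorem rowLen_eq_of_forall_mem_iff {i n : ℕ}
    (h : ∀ j, (i, j) ∈ μ ↔ j < n) : μ.rowLen i = n :=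
  eq_of_forall_lt_iff fun j => mem_iff_lt_rowLen.symm.trans (h j)

theorem hook_eq_betaNumber_sub {i j : ℕ} (h : (i, j) ∈ μ) :
    (μ.hook (i, j) : ℤ) = μ.betaNumber i - μ.colBetaNumber j := by
  have := mem_iff_lt_rowLen.1 h
  have := mem_iff_lt_colLen.1 h
  unfold hook betaNumber colBetaNumber
  dsimp only
  omega

theorem colBetaNumber_lt_betaNumber {i j : ℕ} (h : (i, j) ∈ μ) :
    μ.colBetaNumber j < μ.betaNumber i := by
  have := mem_iff_lt_rowLen.1 h
  have := mem_iff_lt_colLen.1 h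
  unfold betaNumber colBetaNumber; omega

theorem betaNumber_lt_colBetaNumber {i j : ℕ} (h : (i, j) ∉ μ) :
    μ.betaNumber i < μ.colBetaNumber j := by
  have := mt mem_iff_lt_rowLen.2 h
  have := mt mem_iff_lt_colLen.2 h
  unfold betaNumber colBetaNumber; omega

theorem betaNumber_ne_colBetaNumber (i j : ℕ) : μ.betaNumber i ≠ μ.colBetaNumber j := by
  by_cases h : (i, j) ∈ μ
  · exact (colBetaNumber_lt_betaNumber h).ne'
  · exact (betaNumber_lt_colBetaNumber h).ne

variable (μ)

theorem mem_range_betaNumber_or_colBetaNumber (x : ℤ) :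
    x ∈ Set.range μ.betaNumber ∨ x ∈ Set.range μ.colBetaNumber := by
  have hex : ∃ i, μ.betaNumber i ≤ x := ⟨μ.colLen 0 + x.natAbs, by
    rw [betaNumber, μ.rowLen_eq_zero_of_colLen_le (by omega)]; omega⟩
  obtain ⟨i, hi, hmin⟩ : ∃ i, μ.betaNumber i ≤ x ∧ ∀ m < i, x < μ.betaNumber m :=
    ⟨Nat.find hex, Nat.find_spec hex, fun m hm => not_le.1 (Nat.find_min hex hm)⟩
  rcases hi.lt_or_eq with hlt | heq
  · -- `i` is the first row with `β i < x`; the column `j = x + i - 1` then has length `i`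
    right
    unfold betaNumber at hlt hmin
    have hrow : μ.rowLen i ≤ (x + i - 1).toNat := by omega
    have hcol : μ.colLen (x + i - 1).toNat = i := by
      refine le_antisymm (not_lt.1 fun h => ?_) ?_
      · exact (mem_iff_lt_rowLen.1 (mem_iff_lt_colLen.2 h)).not_ge hrow
      · cases i with
        | zero => exact Nat.zero_le _
        | succ m =>
          have hprev := hmin m m.lt_succ_self
          push_cast at hprev hlt ⊢
          exact mem_iff_lt_colLen.1 (mem_iff_lt_rowLen.2 (by omega))
    exact ⟨(x + i - 1).toNat, by unfold colBetaNumber; omega⟩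
  · exact Or.inl ⟨i, heq⟩

theorem isCore_iff (t : ℕ) :
    μ.IsCore t ↔ ∀ x ∈ Set.range μ.betaNumber, x - t ∈ Set.range μ.betaNumber := by
  constructor
  · rintro hcore _ ⟨i, rfl⟩
    refine (μ.mem_range_betaNumber_or_colBetaNumber _).resolve_right ?_
    rintro ⟨j, hj⟩
    have hmem : (i, j) ∈ μ := by
      by_contra h
      have := betaNumber_lt_colBetaNumber h
      omega
    exact hcore (i, j) hmem (by have := hook_eq_betaNumber_sub hmem; omega)
  · rintro hclosed ⟨i, j⟩ hmem hhook
    obtain ⟨m, hm⟩ := hclosed _ ⟨i, rfl⟩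
    have := hook_eq_betaNumber_sub hmem
    exact betaNumber_ne_colBetaNumber (μ := μ) m j (by omega)

theorem isLowerSet_union_of_forall_lt_mem {S : Set (ℕ × ℕ)} (hS : ∀ c ∈ S, ∀ d < c, d ∈ μ) :
    IsLowerSet ((μ.cells : Set (ℕ × ℕ)) ∪ S) := by
  rintro c d hdc (hc | hc)
  · exact Or.inl (μ.isLowerSet hdc hc)
  · rcases hdc.lt_or_eq with hlt | rfl
    · exact Or.inl (hS c hc d hlt)
    · exact Or.inr hc

variable {μ}

theorem isAddable_iff_forall_lt {c : ℕ × ℕ} : μ.IsAddable c ↔ c ∉ μ ∧ ∀ d < c, d ∈ μ := by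
  constructor
  · rintro ⟨hc, ν, hν⟩
    refine ⟨hc, fun d hd => ?_⟩
    have hdν : d ∈ ν.cells := ν.isLowerSet hd.le (by simp [hν])
    rw [hν, Finset.mem_insert] at hdν
    exact hdν.resolve_left hd.ne
  · rintro ⟨hc, hlt⟩
    refine ⟨hc, ⟨insert c μ.cells, ?_⟩, rfl⟩
    rw [Finset.coe_insert, Set.insert_eq, Set.union_comm]
    exact μ.isLowerSet_union_of_forall_lt_mem (by simpa using hlt)

theorem isAddable_iff {i j : ℕ} :
    μ.IsAddable (i, j) ↔ j = μ.rowLen i ∧ ∀ m, m + 1 = i → μ.rowLen i < μ.rowLen m := by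
  rw [isAddable_iff_forall_lt, mem_iff_lt_rowLen, not_lt]
  constructor
  · rintro ⟨hj, hlt⟩
    have hrow : j = μ.rowLen i := hj.antisymm' <| not_lt.1 fun h =>
      (mem_iff_lt_rowLen.1 (hlt _ (Prod.mk_lt_mk_iff_right.2 h))).false
    refine ⟨hrow, fun m hm => ?_⟩
    rw [← hrow]
    exact mem_iff_lt_rowLen.1 (hlt _ (Prod.mk_lt_mk_iff_left.2 (by omega)))
  · rintro ⟨rfl, hprev⟩
    refine ⟨le_rfl, fun ⟨a, b⟩ hab => mem_iff_lt_rowLen.2 ?_⟩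
    rcases Prod.mk_lt_mk.1 hab with ⟨ha, hb⟩ | ⟨ha, hb⟩
    · have := hprev (i - 1) (by omega)
      have := μ.rowLen_anti a (i - 1) (by omega)
      omega
    · exact hb.trans_le (μ.rowLen_anti a i ha)

theorem betaNumber_add_one_mem_range_iff {i : ℕ} :
    μ.betaNumber i + 1 ∈ Set.range μ.betaNumber ↔ ∃ m, m + 1 = i ∧ μ.rowLen m = μ.rowLen i := by
  constructor
  · rintro ⟨m, hm⟩
    have hanti := μ.betaNumber_strictAnti
    have hmi : m < i := hanti.lt_iff_gt.1 (by omega)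
    have hsucc : m + 1 = i := by
      by_contra h
      have := hanti (show m < m + 1 by omega)
      have := hanti (show m + 1 < i by omega)
      omega
    refine ⟨m, hsucc, ?_⟩
    unfold betaNumber at hm
    omega
  · rintro ⟨m, rfl, h⟩
    exact ⟨m, by unfold betaNumber; push_cast; omega⟩

theorem isAddable_rowLen_iff {i : ℕ} :
    μ.IsAddable (i, μ.rowLen i) ↔ μ.betaNumber i + 1 ∉ Set.range μ.betaNumber := by
  rw [isAddable_iff, betaNumber_add_one_mem_range_iff]
  simp only [true_and, not_exists, not_and]
  exact forall_congr' fun m => imp_congr_right fun hm =>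
    (μ.rowLen_anti m i (by omega)).lt_iff_ne'

theorem finite_setOf_isAddable : {c | μ.IsAddable c}.Finite := by
  refine (Set.finite_Iic (μ.colLen 0, μ.rowLen 0)).subset fun ⟨i, j⟩ hc => ?_
  obtain ⟨rfl, hprev⟩ := isAddable_iff.1 hc
  refine ⟨not_lt.1 fun hi => ?_, μ.rowLen_anti 0 i (Nat.zero_le i)⟩
  have := hprev (i - 1) (by simp only at hi; omega)
  rw [μ.rowLen_eq_zero_of_colLen_le (i := i - 1) (by simp only at hi; omega)] at this
  omega

variable (μ)

noncomputable def addAddable (p : ℕ × ℕ → Prop) : YoungDiagram where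
  cells := μ.cells ∪ (finite_setOf_isAddable.subset fun _ hc => hc.1 :
    {c | μ.IsAddable c ∧ p c}.Finite).toFinset
  isLowerSet := by
    rw [Finset.coe_union, Set.Finite.coe_toFinset]
    exact μ.isLowerSet_union_of_forall_lt_mem fun c hc => (isAddable_iff_forall_lt.1 hc.1).2

theorem coe_cells_addAddable (p : ℕ × ℕ → Prop) :
    ((μ.addAddable p).cells : Set (ℕ × ℕ)) = ↑μ.cells ∪ {c | μ.IsAddable c ∧ p c} := by
  rw [addAddable, Finset.coe_union, Set.Finite.coe_toFinset]

theorem mem_addAddable {p : ℕ × ℕ → Prop} {c : ℕ × ℕ} :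
    c ∈ μ.addAddable p ↔ c ∈ μ ∨ (μ.IsAddable c ∧ p c) := by
  rw [← mem_cells, ← Finset.mem_coe, coe_cells_addAddable]
  rfl

open scoped Classical in
theorem rowLen_addAddable (p : ℕ × ℕ → Prop) (i : ℕ) :
    (μ.addAddable p).rowLen i =
      μ.rowLen i + if μ.IsAddable (i, μ.rowLen i) ∧ p (i, μ.rowLen i) then 1 else 0 := by
  refine rowLen_eq_of_forall_mem_iff fun j => ?_
  rw [mem_addAddable, mem_iff_lt_rowLen]
  constructor
  · rintro (hj | ⟨hadd, hp⟩)
    · omega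
    · obtain rfl := (isAddable_iff.1 hadd).1
      rw [if_pos ⟨hadd, hp⟩]
      omega
  · intro hj
    split_ifs at hj with h
    · rcases (Nat.lt_succ_iff.1 hj).lt_or_eq with hlt | rfl
      · exact Or.inl hlt
      · exact Or.inr h
    · exact Or.inl hj

theorem betaNumber_addAddable_residue (k : ℕ) (r : ZMod (k + 1)) :
    (μ.addAddable (residue k · = r)).betaNumber =
      residueShift (k + 1) r (Set.range μ.betaNumber) ∘ μ.betaNumber := by
  funext i
  have hcond : μ.IsAddable (i, μ.rowLen i) ∧ residue k (i, μ.rowLen i) = r ↔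
      (μ.betaNumber i : ZMod (k + 1)) = r ∧ μ.betaNumber i + 1 ∉ Set.range μ.betaNumber := by
    rw [isAddable_rowLen_iff, and_comm]
    rfl
  rw [Function.comp_apply, betaNumber, rowLen_addAddable, residueShift]
  by_cases h : (μ.betaNumber i : ZMod (k + 1)) = r ∧ μ.betaNumber i + 1 ∉ Set.range μ.betaNumber
  · rw [if_pos h, if_pos (hcond.2 h), betaNumber]
    push_cast
    ring
  · rw [if_neg h, if_neg (mt hcond.1 h), betaNumber]
    simp

end YoungDiagram

theorem add_all_addable_cells_of_residue_general (k : ℕ) (hk : 1 ≤ k)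
    (lam : YoungDiagram) (hcore : lam.IsCore (k + 1)) (r : ZMod (k + 1)) :
    ∃ ν : YoungDiagram,
      (ν.cells : Set (ℕ × ℕ)) = ↑lam.cells ∪ {c | lam.IsAddable c ∧ residue k c = r} ∧
      ν.IsCore (k + 1) := by
  refine ⟨lam.addAddable (residue k · = r), lam.coe_cells_addAddable _, ?_⟩
  have hone : (1 : ZMod (k + 1)) ≠ 0 := by
    have : Fact (1 < k + 1) := ⟨by omega⟩
    exact one_ne_zero
  rw [YoungDiagram.isCore_iff] at hcore ⊢
  rw [YoungDiagram.betaNumber_addAddable_residue, Set.range_comp]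
  exact residueShift_sub_mem_image hone hcore r

/-- If a `(k+1)`-core `λ` has an addable cell of residue `r`, then adding
all addable cells of residue `r` yields the Young diagram of a partition, which is again
a `(k+1)`-core. -/
theorem add_all_addable_cells_of_residue (k : ℕ) (hk : 1 ≤ k)
    (lam : YoungDiagram) (hcore : lam.IsCore (k + 1)) (r : ZMod (k + 1))
    (hex : ∃ c : ℕ × ℕ, lam.IsAddable c ∧ residue k c = r) :
    ∃ ν : YoungDiagram,
      (ν.cells : Set (ℕ × ℕ)) = ↑lam.cells ∪ {c | lam.IsAddable c ∧ residue k c = r} ∧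
      ν.IsCore (k + 1) :=
  add_all_addable_cells_of_residue_general k hk lam hcore r
end
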